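/- arXiv:2409.00959 — 3 statements merged into one kernel-verified Lean document; each statement's English description precedes it below -/
import Mathlib

section
/- Let f be C^3 on an open interval I with f'(x) ≠ 0 for all x, and suppose Sf(x) < 0 everywhere. Then f' has no positive local minimum and no negative local maximum on I. -/
noncomputable def Schwarzian (f : ℝ → ℝ) (x : ℝ) : ℝ :=
  iteratedDeriv 3 f x / deriv f x - 3 / 2 * (iteratedDeriv 2 f x / deriv f x) ^ 2

/-!
At a local extremum `x` of `f'` the term `f''(x)` vanishes, so `Sf(x) = f'''(x) / f'(x)`.
The second-derivative test applied to `f'` forces `f'''(x) ≥ 0` at a local minimum and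
`f'''(x) ≤ 0` at a local maximum, so at a positive local minimum or a negative local maximum
`Sf(x) ≥ 0`.
-/

open Filter Topology

section SecondDerivative

variable {g : ℝ → ℝ} {x : ℝ}

theorem IsLocalMin.deriv_deriv_eq_zero_of_isLocalMax (hmin : IsLocalMin g x)
    (hmax : IsLocalMax g x) : deriv (deriv g) x = 0 := by
  have hconst : g =ᶠ[𝓝 x] fun _ => g x := by
    filter_upwards [hmin, hmax] with y hy_ge hy_le using le_antisymm hy_le hy_ge
  simpa using hconst.deriv.deriv_eq

theorem IsLocalMin.deriv_deriv_nonneg (hmin : IsLocalMin g x) (hc : ContinuousAt g x) :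
    0 ≤ deriv (deriv g) x :=
  -- If `g''(x) < 0`, the second-derivative test makes `x` also a local maximum, so `g` is
  -- locally constant and `g''(x) = 0`.
  not_lt.1 fun hneg => hneg.ne <| hmin.deriv_deriv_eq_zero_of_isLocalMax <|
    isLocalMax_of_deriv_deriv_neg hneg hmin.deriv_eq_zero hc

theorem IsLocalMax.deriv_deriv_nonpos (hmax : IsLocalMax g x) (hc : ContinuousAt g x) :
    deriv (deriv g) x ≤ 0 :=
  not_lt.1 fun hpos => hpos.ne' <|
    (isLocalMin_of_deriv_deriv_pos hpos hmax.deriv_eq_zero hc).deriv_deriv_eq_zero_of_isLocalMax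
      hmax

end SecondDerivative

theorem schwarzian_eq_of_deriv_deriv_eq_zero {f : ℝ → ℝ} {x : ℝ}
    (h : deriv (deriv f) x = 0) :
    Schwarzian f x = deriv (deriv (deriv f)) x / deriv f x := by
  simp [Schwarzian, iteratedDeriv_succ, h]

theorem no_pos_local_min_of_neg_schwarzian_general (a b : ℝ) (f : ℝ → ℝ)
    (hf : ContDiff ℝ 3 f)
    (hS : ∀ x ∈ Set.Ioo a b, Schwarzian f x < 0) :
    ∀ x ∈ Set.Ioo a b,
      ¬ (IsLocalMin (deriv f) x ∧ 0 < deriv f x) ∧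
      ¬ (IsLocalMax (deriv f) x ∧ deriv f x < 0) := by
  intro x hx
  have hc : ContinuousAt (deriv f) x := (hf.continuous_deriv (by norm_num)).continuousAt
  refine ⟨fun ⟨hmin, hpos⟩ => ?_, fun ⟨hmax, hneg⟩ => ?_⟩
  · have hS_nonneg : 0 ≤ Schwarzian f x := by
      rw [schwarzian_eq_of_deriv_deriv_eq_zero hmin.deriv_eq_zero]
      exact div_nonneg (hmin.deriv_deriv_nonneg hc) hpos.le
    exact (hS x hx).not_ge hS_nonneg
  · have hS_nonneg : 0 ≤ Schwarzian f x := by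
      rw [schwarzian_eq_of_deriv_deriv_eq_zero hmax.deriv_eq_zero]
      exact div_nonneg_of_nonpos (hmax.deriv_deriv_nonpos hc) hneg.le
    exact (hS x hx).not_ge hS_nonneg

theorem no_pos_local_min_of_neg_schwarzian (a b : ℝ) (f : ℝ → ℝ)
    (hf : ContDiff ℝ 3 f)
    (hd : ∀ x ∈ Set.Ioo a b, deriv f x ≠ 0)
    (hS : ∀ x ∈ Set.Ioo a b, Schwarzian f x < 0) :
    ∀ x ∈ Set.Ioo a b,
      ¬ (IsLocalMin (deriv f) x ∧ 0 < deriv f x) ∧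
      ¬ (IsLocalMax (deriv f) x ∧ deriv f x < 0) :=
  no_pos_local_min_of_neg_schwarzian_general a b f hf hS
end

section
/- Let g : [a,b] → ℝ be continuous and nonvanishing on [a,b], and suppose g has no positive local minimum and no negative local maximum in (a,b). Then for all x ∈ (a,b), |g(x)| > min{|g(a)|, |g(b)|} or g is constant on [a,b]. -/
/-!
Since `g` does not vanish, near any point of `[a, b]` the function `|g|` coincides with `g` or
with `-g`. Hence an interior minimum of `|g|` on `[a, b]` would be a positive local minimum or a
negative local maximum of `g`. So the continuous function `|g|` attains its minimum on `[a, b]`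
only at the endpoints, and every interior value of `|g|` exceeds `min |g a| |g b|`.
-/

open Set Filter

section AbsExtremum

variable {α β : Type*} [TopologicalSpace α] [AddCommGroup β] [LinearOrder β]
  [IsOrderedAddMonoid β] [TopologicalSpace β] [OrderTopology β]
  {f : α → β} {s : Set α} {x : α}

theorem IsMinOn.isLocalMinOn_of_abs (h : IsMinOn (fun y => |f y|) s x)
    (hf : ContinuousWithinAt f s x) (hx : 0 < f x) : IsLocalMinOn f s x := by
  filter_upwards [hf.eventually (lt_mem_nhds hx), self_mem_nhdsWithin] with y hy hys
  simpa only [abs_of_pos hx, abs_of_pos hy] using isMinOn_iff.1 h y hys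

theorem IsMinOn.isLocalMaxOn_of_abs (h : IsMinOn (fun y => |f y|) s x)
    (hf : ContinuousWithinAt f s x) (hx : f x < 0) : IsLocalMaxOn f s x := by
  filter_upwards [hf.eventually (gt_mem_nhds hx), self_mem_nhdsWithin] with y hy hys
  simpa only [abs_of_neg hx, abs_of_neg hy, neg_le_neg_iff] using isMinOn_iff.1 h y hys

end AbsExtremum

theorem ContinuousOn.min_lt_apply_of_no_interior_min {α β : Type*} [LinearOrder α]
    [TopologicalSpace α] [CompactIccSpace α] [LinearOrder β] [TopologicalSpace β]
    [ClosedIicTopology β] {f : α → β} {a b x : α} (hf : ContinuousOn f (Icc a b))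
    (hmin : ∀ y ∈ Ioo a b, ¬ IsMinOn f (Icc a b) y) (hx : x ∈ Ioo a b) :
    min (f a) (f b) < f x := by
  by_contra! hx_le
  obtain ⟨c, hc, hc_min⟩ :=
    isCompact_Icc.exists_isMinOn (nonempty_Icc.2 (hx.1.trans hx.2).le) hf
  have hc_end : c = a ∨ c = b := by
    by_contra! hne
    exact hmin c ⟨hc.1.lt_of_ne hne.1.symm, hc.2.lt_of_ne hne.2⟩ hc_min
  have hxc : f x ≤ f c := by
    rcases hc_end with rfl | rfl
    · exact hx_le.trans (min_le_left _ _)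
    · exact hx_le.trans (min_le_right _ _)
  exact hmin x hx fun y hy => hxc.trans (hc_min hy)

theorem minimum_principle_of_no_pos_min_neg_max_general (a b : ℝ) (g : ℝ → ℝ)
    (hc : ContinuousOn g (Set.Icc a b))
    (hnz : ∀ x ∈ Set.Icc a b, g x ≠ 0)
    (hmin : ∀ x ∈ Set.Ioo a b, ¬ (IsLocalMinOn g (Set.Icc a b) x ∧ 0 < g x))
    (hmax : ∀ x ∈ Set.Ioo a b, ¬ (IsLocalMaxOn g (Set.Icc a b) x ∧ g x < 0)) :
    (∀ x ∈ Set.Ioo a b, min |g a| |g b| < |g x|) ∨ (∀ x ∈ Set.Icc a b, g x = g a) := by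
  refine Or.inl fun x hx => hc.abs.min_lt_apply_of_no_interior_min (fun y hy hy_min => ?_) hx
  have hgy : ContinuousWithinAt g (Icc a b) y := hc y (Ioo_subset_Icc_self hy)
  rcases (hnz y (Ioo_subset_Icc_self hy)).lt_or_gt with hneg | hpos
  · exact hmax y hy ⟨hy_min.isLocalMaxOn_of_abs hgy hneg, hneg⟩
  · exact hmin y hy ⟨hy_min.isLocalMinOn_of_abs hgy hpos, hpos⟩

theorem minimum_principle_of_no_pos_min_neg_max (a b : ℝ) (hab : a < b) (g : ℝ → ℝ)
    (hc : ContinuousOn g (Set.Icc a b))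
    (hnz : ∀ x ∈ Set.Icc a b, g x ≠ 0)
    (hmin : ∀ x ∈ Set.Ioo a b, ¬ (IsLocalMinOn g (Set.Icc a b) x ∧ 0 < g x))
    (hmax : ∀ x ∈ Set.Ioo a b, ¬ (IsLocalMaxOn g (Set.Icc a b) x ∧ g x < 0)) :
    (∀ x ∈ Set.Ioo a b, min |g a| |g b| < |g x|) ∨ (∀ x ∈ Set.Icc a b, g x = g a) :=
  minimum_principle_of_no_pos_min_neg_max_general a b g hc hnz hmin hmax
end

section
/- Let f be C^3 on an interval with nonzero derivative everywhere relevant, and suppose Sf < 0 everywhere. Then (fⁿ)' satisfies the Minimum Principle on every compact subinterval [a,b] on which (fⁿ)' does not vanish: for all x ∈ (a,b), |(fⁿ)'(x)| > min{|(fⁿ)'(a)|, |(fⁿ)'(b)|}, assuming (fⁿ)' is nonconstant on [a,b]. -/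
/-!
Negative Schwarzian passes to every iterate `g = fⁿ` (`n ≥ 1`) through the cocycle rule
`S(u ∘ v) = (Su ∘ v) · (v')² + Sv`. At a local minimum `c` of `|g'|`, hence of `q = (g')²`, we get
`g''(c) = 0` and then `q''(c) = 2 g'(c) g'''(c) = 2 g'(c)² Sg(c) < 0`, so `c` is also a local
maximum of `q`; thus `q` is constant near `c`, contradicting `q''(c) ≠ 0`. A continuous function
on `[a, b]` without interior local minima stays strictly above the smaller endpoint value inside.
-/

open Set Filter Topology

lemma min_lt_of_forall_not_isLocalMin {q : ℝ → ℝ} {a b x : ℝ} (hq : ContinuousOn q (Icc a b))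
    (hloc : ∀ c ∈ Ioo a b, ¬ IsLocalMin q c) (hx : x ∈ Ioo a b) :
    min (q a) (q b) < q x := by
  by_contra! hxle
  obtain ⟨c, hc, hcmin⟩ := isCompact_Icc.exists_isMinOn ⟨x, Ioo_subset_Icc_self hx⟩ hq
  suffices ∃ c ∈ Ioo a b, IsMinOn q (Icc a b) c by
    obtain ⟨c, hc, hcmin⟩ := this
    exact hloc c hc (hcmin.isLocalMin (Icc_mem_nhds hc.1 hc.2))
  by_cases hcI : c ∈ Ioo a b
  · exact ⟨c, hcI, hcmin⟩
  have hcab : c = a ∨ c = b := by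
    have hc' : c ∈ Icc a b \ Ioo a b := ⟨hc, hcI⟩
    rwa [Icc_sdiff_Ioo_same (hx.1.trans hx.2).le] at hc'
  have hxc : q x ≤ q c := by
    rcases hcab with rfl | rfl
    exacts [hxle.trans (min_le_left _ _), hxle.trans (min_le_right _ _)]
  exact ⟨x, hx, fun y hy => hxc.trans (hcmin hy)⟩

lemma ContDiff.iterate {𝕜 E : Type*} [NontriviallyNormedField 𝕜] [NormedAddCommGroup E]
    [NormedSpace 𝕜 E] {k : WithTop ℕ∞} {f : E → E} (hf : ContDiff 𝕜 k f) (n : ℕ) :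
    ContDiff 𝕜 k f^[n] := by
  induction n with
  | zero => exact contDiff_id
  | succ n ih => exact Function.iterate_succ' f n ▸ hf.comp ih

lemma deriv_iterate_ne_zero {𝕜 : Type*} [NontriviallyNormedField 𝕜] {f : 𝕜 → 𝕜}
    (hf : Differentiable 𝕜 f) (hd : ∀ x, deriv f x ≠ 0) (n : ℕ) (x : 𝕜) :
    deriv f^[n] x ≠ 0 := by
  induction n generalizing x with
  | zero => simp
  | succ n ih =>
    rw [Function.iterate_succ', deriv_comp x (hf _) (hf.iterate n x)]
    exact mul_ne_zero (hd _) (ih x)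

lemma schwarzian_eq_deriv (f : ℝ → ℝ) (x : ℝ) :
    Schwarzian f x = deriv (deriv (deriv f)) x / deriv f x
      - 3 / 2 * (deriv (deriv f) x / deriv f x) ^ 2 := by
  simp only [Schwarzian, iteratedDeriv_succ, iteratedDeriv_zero]

lemma ContDiff.differentiable_deriv_of_three {f : ℝ → ℝ} (hf : ContDiff ℝ 3 f) :
    Differentiable ℝ (deriv f) :=
  (hf.deriv' (n := 2)).differentiable (by norm_num)

lemma ContDiff.differentiable_deriv_deriv_of_three {f : ℝ → ℝ} (hf : ContDiff ℝ 3 f) :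
    Differentiable ℝ (deriv (deriv f)) :=
  ((hf.deriv' (n := 2)).deriv' (n := 1)).differentiable one_ne_zero

section ChainRule

variable {u v : ℝ → ℝ}

lemma deriv_comp_eq (hu : Differentiable ℝ u) (hv : Differentiable ℝ v) :
    deriv (u ∘ v) = fun x => deriv u (v x) * deriv v x :=
  funext fun x => deriv_comp x (hu (v x)) (hv x)

lemma deriv_deriv_comp_eq (hu : ContDiff ℝ 3 u) (hv : ContDiff ℝ 3 v) :
    deriv (deriv (u ∘ v)) =
      fun x => deriv (deriv u) (v x) * deriv v x ^ 2 + deriv u (v x) * deriv (deriv v) x := by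
  rw [deriv_comp_eq (hu.differentiable (by norm_num)) (hv.differentiable (by norm_num))]
  funext x
  have hu' := (hu.differentiable_deriv_of_three (v x)).hasDerivAt.comp x
    (hv.differentiable (by norm_num) x).hasDerivAt
  exact (hu'.mul (hv.differentiable_deriv_of_three x).hasDerivAt).deriv.trans
    (by simp only [Function.comp_apply]; ring)

lemma deriv_deriv_deriv_comp (hu : ContDiff ℝ 3 u) (hv : ContDiff ℝ 3 v) (x : ℝ) :
    deriv (deriv (deriv (u ∘ v))) x =
      deriv (deriv (deriv u)) (v x) * deriv v x ^ 3
        + 3 * deriv (deriv u) (v x) * deriv v x * deriv (deriv v) x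
        + deriv u (v x) * deriv (deriv (deriv v)) x := by
  rw [deriv_deriv_comp_eq hu hv]
  have hvx := (hv.differentiable (by norm_num) x).hasDerivAt
  have hv' := (hv.differentiable_deriv_of_three x).hasDerivAt
  have hu' := (hu.differentiable_deriv_of_three (v x)).hasDerivAt.comp x hvx
  have hu'' := (hu.differentiable_deriv_deriv_of_three (v x)).hasDerivAt.comp x hvx
  have hv'' := (hv.differentiable_deriv_deriv_of_three x).hasDerivAt
  exact ((hu''.mul (hv'.pow 2)).add (hu'.mul hv'')).deriv.trans
    (by simp only [Function.comp_apply, Pi.pow_apply]; ring)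

theorem schwarzian_comp (hu : ContDiff ℝ 3 u) (hv : ContDiff ℝ 3 v) {x : ℝ}
    (hux : deriv u (v x) ≠ 0) (hvx : deriv v x ≠ 0) :
    Schwarzian (u ∘ v) x = Schwarzian u (v x) * deriv v x ^ 2 + Schwarzian v x := by
  rw [schwarzian_eq_deriv, schwarzian_eq_deriv, schwarzian_eq_deriv,
    deriv_deriv_deriv_comp hu hv, deriv_deriv_comp_eq hu hv,
    deriv_comp_eq (hu.differentiable (by norm_num)) (hv.differentiable (by norm_num))]
  field_simp
  ring

end ChainRule

lemma schwarzian_iterate_neg {f : ℝ → ℝ} (hf : ContDiff ℝ 3 f) (hd : ∀ x, deriv f x ≠ 0)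
    (hS : ∀ x, Schwarzian f x < 0) {n : ℕ} (hn : 1 ≤ n) (x : ℝ) : Schwarzian f^[n] x < 0 := by
  induction n, hn using Nat.le_induction generalizing x with
  | base => simpa using hS x
  | succ n _ ih =>
    have hdn := deriv_iterate_ne_zero (hf.differentiable (by norm_num)) hd n x
    rw [Function.iterate_succ', schwarzian_comp hf (hf.iterate n) (hd _) hdn]
    linarith [ih x, mul_neg_of_neg_of_pos (hS (f^[n] x)) (sq_pos_of_ne_zero hdn)]

lemma deriv_sq_deriv {g : ℝ → ℝ} (hg : Differentiable ℝ (deriv g)) :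
    deriv (fun y => deriv g y ^ 2) = fun y => 2 * deriv g y * deriv (deriv g) y :=
  funext fun y => ((hg y).hasDerivAt.pow 2).deriv.trans (by ring)

lemma not_isLocalMin_abs_deriv {g : ℝ → ℝ} (hg : ContDiff ℝ 3 g) {c : ℝ} (hc : deriv g c ≠ 0)
    (hS : Schwarzian g c < 0) : ¬ IsLocalMin (fun y => |deriv g y|) c := by
  intro hmin
  set q : ℝ → ℝ := fun y => deriv g y ^ 2
  have hg1 := hg.differentiable_deriv_of_three
  have hqmin : IsLocalMin q c := hmin.mono fun y hy => sq_le_sq.mpr hy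
  have hcrit : deriv q c = 0 := hqmin.deriv_eq_zero
  have hc2 : deriv (deriv g) c = 0 := by simpa [q, deriv_sq_deriv hg1, hc] using hcrit
  have hq'' : deriv (deriv q) c = 2 * deriv g c * deriv (deriv (deriv g)) c := by
    rw [deriv_sq_deriv hg1]
    refine (((hg1 c).hasDerivAt.const_mul 2).mul
      (hg.differentiable_deriv_deriv_of_three c).hasDerivAt).deriv.trans ?_
    rw [hc2]; ring
  replace hS : deriv (deriv (deriv g)) c / deriv g c < 0 := by
    simpa [schwarzian_eq_deriv, hc2] using hS
  have hq''_neg : deriv (deriv q) c < 0 := by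
    have hprod : deriv g c * deriv (deriv (deriv g)) c
        = deriv g c ^ 2 * (deriv (deriv (deriv g)) c / deriv g c) := by
      field_simp
    rw [hq'', mul_assoc, hprod]
    exact mul_neg_of_pos_of_neg two_pos (mul_neg_of_pos_of_neg (sq_pos_of_ne_zero hc) hS)
  have hqmax : IsLocalMax q c :=
    isLocalMax_of_deriv_deriv_neg hq''_neg hcrit ((hg1 c).continuousAt.fun_pow 2)
  have hconst : q =ᶠ[𝓝 c] fun _ => q c :=
    (hqmax.and hqmin).mono fun y hy => le_antisymm hy.1 hy.2
  have : deriv (deriv q) c = 0 := by rw [hconst.deriv.deriv_eq]; simp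
  linarith

theorem iterate_deriv_minimum_principle_general (f : ℝ → ℝ)
    (hf : ContDiff ℝ 3 f)
    (hd : ∀ x, deriv f x ≠ 0)
    (hS : ∀ x, Schwarzian f x < 0)
    (n : ℕ) (hn : 1 ≤ n) (a b : ℝ) :
    ∀ x ∈ Set.Ioo a b,
      min |deriv (f^[n]) a| |deriv (f^[n]) b| < |deriv (f^[n]) x| := by
  have hg : ContDiff ℝ 3 f^[n] := hf.iterate n
  intro x hx
  refine min_lt_of_forall_not_isLocalMin (q := fun y => |deriv f^[n] y|) ?_ ?_ hx
  · exact ((hg.continuous_deriv (by norm_num)).abs).continuousOn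
  · exact fun c _ => not_isLocalMin_abs_deriv hg
      (deriv_iterate_ne_zero (hf.differentiable (by norm_num)) hd n c)
      (schwarzian_iterate_neg hf hd hS hn c)

theorem iterate_deriv_minimum_principle (f : ℝ → ℝ)
    (hf : ContDiff ℝ 3 f)
    (hd : ∀ x, deriv f x ≠ 0)
    (hS : ∀ x, Schwarzian f x < 0)
    (n : ℕ) (hn : 1 ≤ n) (a b : ℝ) (hab : a < b)
    (hnz : ∀ x ∈ Set.Icc a b, deriv (f^[n]) x ≠ 0)
    (hnc : ¬ ∀ x ∈ Set.Icc a b, deriv (f^[n]) x = deriv (f^[n]) a) :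
    ∀ x ∈ Set.Ioo a b,
      min |deriv (f^[n]) a| |deriv (f^[n]) b| < |deriv (f^[n]) x| :=
  iterate_deriv_minimum_principle_general f hf hd hS n hn a b
end
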